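/- arXiv:0705.2412 — 2 statements merged into one kernel-verified Lean document; each statement's English description precedes it below -/
import Mathlib

section
/- Let $a<b$ be real, let $T_0:(a,b)\to M_n(\mathbb{C})$ be differentiable and $T_1,T_2,T_3:(a,b)\to M_n(\mathbb{C})$ be continuous, all skew-hermitian valued, let $c,x_1,x_2,x_3\in\mathbb{R}$, and set $\gamma = T_0 - ic$. Suppose $v:(a,b)\to\mathbb{C}^n$ is twice differentiable and satisfies $(v'+\gamma v)' + \gamma(v'+\gamma v) + \sum_{j=1}^3 (T_j - ix_j)^2 v = 0$ on $(a,b)$. If $v(z_1)=v(z_2)=0$ for some $z_1<z_2$ in $(a,b)$, then $v(z)=0$ for all $z\in[z_1,z_2]$. -/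
/-! With `⟪x, y⟫ = Re (star x ⬝ᵥ y)`, the function `f t = ‖v t‖²` satisfies
`f'' = 2 (⟪v, v''⟫ + ‖v'‖²)`. Since `γ`, `γ' = T₀'` and `Sₖ = Tₖ - i xₖ` are skew-hermitian, the
equation gives `⟪v, v''⟫ + ‖v'‖² = ‖v' + γ v‖² + ∑ ‖Sₖ v‖² ≥ 0`, so `f` is convex; a nonnegative
convex function vanishing at `z₁` and `z₂` vanishes on `[z₁, z₂]`. -/

open Matrix Set

open Filter Topology

section

variable {ι : Type*}

theorem conjTranspose_sub_I_mul_smul_one [DecidableEq ι] {A : Matrix ι ι ℂ} (hA : Aᴴ = -A) (x : ℝ) :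
    (A - (Complex.I * x) • (1 : Matrix ι ι ℂ))ᴴ = -(A - (Complex.I * x) • 1) := by
  rw [conjTranspose_sub, conjTranspose_smul, conjTranspose_one, hA, star_mul', Complex.star_def,
    Complex.conj_I, Complex.conj_ofReal, neg_mul, neg_smul]
  abel

theorem conjTranspose_eq_neg_of_hasDerivAt {T : ℝ → Matrix ι ι ℂ} {T' : Matrix ι ι ℂ} {z : ℝ}
    (hT : ∀ i j, HasDerivAt (fun t => T t i j) (T' i j) z) (hskew : ∀ᶠ t in 𝓝 z, (T t)ᴴ = -T t) :
    T'ᴴ = -T' := by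
  ext i j
  have hentry : (fun t => star (T t j i)) =ᶠ[𝓝 z] fun t => -T t i j :=
    hskew.mono fun t ht => by simpa using congrFun (congrFun ht i) j
  exact ((hT j i).star.congr_of_eventuallyEq hentry.symm).unique (hT i j).neg

variable [Fintype ι]

theorem re_star_dotProduct_comm (u w : ι → ℂ) : (star u ⬝ᵥ w).re = (star w ⬝ᵥ u).re := by
  rw [star_dotProduct, Complex.star_def, Complex.conj_re]

theorem re_star_dotProduct_self_nonneg (v : ι → ℂ) : 0 ≤ (star v ⬝ᵥ v).re := by
  open ComplexOrder in exact (Complex.nonneg_iff.1 (dotProduct_star_self_nonneg v)).1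

theorem re_star_dotProduct_self_eq_zero {v : ι → ℂ} : (star v ⬝ᵥ v).re = 0 ↔ v = 0 := by
  open ComplexOrder in
  obtain ⟨-, him⟩ := Complex.nonneg_iff.1 (dotProduct_star_self_nonneg v)
  rw [← dotProduct_star_self_eq_zero, Complex.ext_iff]
  simp [← him]

theorem star_dotProduct_mulVec_of_conjTranspose_eq_neg {A : Matrix ι ι ℂ} (hA : Aᴴ = -A)
    (u w : ι → ℂ) : star u ⬝ᵥ A *ᵥ w = -(star (A *ᵥ u) ⬝ᵥ w) := by
  rw [star_mulVec, ← dotProduct_mulVec, hA, neg_mulVec, dotProduct_neg, neg_neg]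

theorem re_star_dotProduct_mulVec_self_of_conjTranspose_eq_neg {A : Matrix ι ι ℂ}
    (hA : Aᴴ = -A) (u : ι → ℂ) : (star u ⬝ᵥ A *ᵥ u).re = 0 := by
  have h := congrArg Complex.re (star_dotProduct_mulVec_of_conjTranspose_eq_neg hA u u)
  rw [Complex.neg_re, re_star_dotProduct_comm (A *ᵥ u)] at h
  linarith

theorem re_star_dotProduct_add_nonneg_of_ode {G M S₁ S₂ S₃ : Matrix ι ι ℂ} (hG : Gᴴ = -G)
    (hM : Mᴴ = -M) (hS₁ : S₁ᴴ = -S₁) (hS₂ : S₂ᴴ = -S₂) (hS₃ : S₃ᴴ = -S₃) {V V' V'' : ι → ℂ}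
    (hode : (V'' + M *ᵥ V + G *ᵥ V') + G *ᵥ (V' + G *ᵥ V)
      + (S₁ * S₁) *ᵥ V + (S₂ * S₂) *ᵥ V + (S₃ * S₃) *ᵥ V = 0) :
    0 ≤ (star V ⬝ᵥ V'').re + (star V' ⬝ᵥ V').re := by
  set w := V' + G *ᵥ V
  have hV'' : V'' = -(M *ᵥ V) - G *ᵥ V' - G *ᵥ w
      - S₁ *ᵥ S₁ *ᵥ V - S₂ *ᵥ S₂ *ᵥ V - S₃ *ᵥ S₃ *ᵥ V := by
    simp only [mulVec_mulVec]
    linear_combination hode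
  have hw : (star w ⬝ᵥ w).re = (star V' ⬝ᵥ V').re + 2 * (star (G *ᵥ V) ⬝ᵥ V').re
      + (star (G *ᵥ V) ⬝ᵥ G *ᵥ V).re := by
    simp only [w, star_add, add_dotProduct, dotProduct_add, Complex.add_re,
      re_star_dotProduct_comm V' (G *ᵥ V)]
    ring
  have hsquares : (star V ⬝ᵥ V'').re + (star V' ⬝ᵥ V').re = (star w ⬝ᵥ w).re
      + (star (S₁ *ᵥ V) ⬝ᵥ S₁ *ᵥ V).re + (star (S₂ *ᵥ V) ⬝ᵥ S₂ *ᵥ V).re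
      + (star (S₃ *ᵥ V) ⬝ᵥ S₃ *ᵥ V).re := by
    have hGV' := star_dotProduct_mulVec_of_conjTranspose_eq_neg hG V V'
    have hGw := star_dotProduct_mulVec_of_conjTranspose_eq_neg hG V w
    have hS₁V := star_dotProduct_mulVec_of_conjTranspose_eq_neg hS₁ V (S₁ *ᵥ V)
    have hS₂V := star_dotProduct_mulVec_of_conjTranspose_eq_neg hS₂ V (S₂ *ᵥ V)
    have hS₃V := star_dotProduct_mulVec_of_conjTranspose_eq_neg hS₃ V (S₃ *ᵥ V)
    rw [hw, hV'']
    simp only [dotProduct_sub, dotProduct_neg, Complex.sub_re, Complex.neg_re, hGV', hGw, hS₁V,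
      hS₂V, hS₃V, re_star_dotProduct_mulVec_self_of_conjTranspose_eq_neg hM]
    simp only [w, dotProduct_add, Complex.add_re]
    ring
  rw [hsquares]
  have := re_star_dotProduct_self_nonneg w
  have := re_star_dotProduct_self_nonneg (S₁ *ᵥ V)
  have := re_star_dotProduct_self_nonneg (S₂ *ᵥ V)
  have := re_star_dotProduct_self_nonneg (S₃ *ᵥ V)
  linarith

theorem hasDerivAt_re_star_dotProduct {u w : ℝ → ι → ℂ} {u' w' : ι → ℂ} {z : ℝ}
    (hu : ∀ i, HasDerivAt (fun t => u t i) (u' i) z)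
    (hw : ∀ i, HasDerivAt (fun t => w t i) (w' i) z) :
    HasDerivAt (fun t => (star (u t) ⬝ᵥ w t).re) (star u' ⬝ᵥ w z + star (u z) ⬝ᵥ w').re z := by
  have h : HasDerivAt (fun t => star (u t) ⬝ᵥ w t) (star u' ⬝ᵥ w z + star (u z) ⬝ᵥ w') z := by
    simp only [dotProduct, Pi.star_apply, ← Finset.sum_add_distrib]
    exact HasDerivAt.fun_sum fun i _ => (hu i).star.mul (hw i)
  exact Complex.reCLM.hasFDerivAt.comp_hasDerivAt z h

theorem hasDerivAt_re_star_dotProduct_self {v : ℝ → ι → ℂ} {v' : ι → ℂ} {z : ℝ}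
    (hv : ∀ i, HasDerivAt (fun t => v t i) (v' i) z) :
    HasDerivAt (fun t => (star (v t) ⬝ᵥ v t).re) (2 * (star (v z) ⬝ᵥ v').re) z := by
  refine (hasDerivAt_re_star_dotProduct hv hv).congr_deriv ?_
  rw [Complex.add_re, re_star_dotProduct_comm v']
  ring

end

theorem convexOn_of_hasDerivAt2_nonneg {D : Set ℝ} (hD : Convex ℝ D) (hDo : IsOpen D)
    {f f' f'' : ℝ → ℝ} (hf' : ∀ x ∈ D, HasDerivAt f (f' x) x)
    (hf'' : ∀ x ∈ D, HasDerivAt f' (f'' x) x) (hf''₀ : ∀ x ∈ D, 0 ≤ f'' x) : ConvexOn ℝ D f := by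
  refine convexOn_of_hasDerivWithinAt2_nonneg (f' := f') (f'' := f'') hD
    (fun x hx => (hf' x hx).continuousAt.continuousWithinAt) ?_ ?_ ?_ <;> rw [hDo.interior_eq]
  exacts [fun x hx => (hf' x hx).hasDerivWithinAt, fun x hx => (hf'' x hx).hasDerivWithinAt, hf''₀]

theorem vanishing_between_zeros_general {n : ℕ} (a b : ℝ)
    (T0 T0' T1 T2 T3 : ℝ → Matrix (Fin n) (Fin n) ℂ)
    (hT0 : ∀ z ∈ Ioo a b, ∀ i j, HasDerivAt (fun t => T0 t i j) (T0' z i j) z)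
    (hskew : ∀ z ∈ Ioo a b,
        (T0 z)ᴴ = -T0 z ∧ (T1 z)ᴴ = -T1 z ∧ (T2 z)ᴴ = -T2 z ∧ (T3 z)ᴴ = -T3 z)
    (c x1 x2 x3 : ℝ)
    (v v' v'' : ℝ → Fin n → ℂ)
    (hv : ∀ z ∈ Ioo a b, ∀ i, HasDerivAt (fun t => v t i) (v' z i) z)
    (hv' : ∀ z ∈ Ioo a b, ∀ i, HasDerivAt (fun t => v' t i) (v'' z i) z)
    (hode : ∀ z ∈ Ioo a b,
        (v'' z + (T0' z).mulVec (v z)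
            + (T0 z - (Complex.I * ((c : ℝ) : ℂ))
                • (1 : Matrix (Fin n) (Fin n) ℂ)).mulVec (v' z))
          + (T0 z - (Complex.I * ((c : ℝ) : ℂ))
                • (1 : Matrix (Fin n) (Fin n) ℂ)).mulVec
              (v' z + (T0 z - (Complex.I * ((c : ℝ) : ℂ))
                • (1 : Matrix (Fin n) (Fin n) ℂ)).mulVec (v z))
          + ((T1 z - (Complex.I * ((x1 : ℝ) : ℂ)) • (1 : Matrix (Fin n) (Fin n) ℂ))
              * (T1 z - (Complex.I * ((x1 : ℝ) : ℂ)) • (1 : Matrix (Fin n) (Fin n) ℂ))).mulVec (v z)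
          + ((T2 z - (Complex.I * ((x2 : ℝ) : ℂ)) • (1 : Matrix (Fin n) (Fin n) ℂ))
              * (T2 z - (Complex.I * ((x2 : ℝ) : ℂ)) • (1 : Matrix (Fin n) (Fin n) ℂ))).mulVec (v z)
          + ((T3 z - (Complex.I * ((x3 : ℝ) : ℂ)) • (1 : Matrix (Fin n) (Fin n) ℂ))
              * (T3 z - (Complex.I * ((x3 : ℝ) : ℂ)) • (1 : Matrix (Fin n) (Fin n) ℂ))).mulVec (v z)
          = 0)
    (z₁ z₂ : ℝ) (hz₁ : z₁ ∈ Ioo a b) (hz₂ : z₂ ∈ Ioo a b) (h12 : z₁ < z₂)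
    (hv1 : v z₁ = 0) (hv2 : v z₂ = 0) :
    ∀ z ∈ Icc z₁ z₂, v z = 0 := by
  have hconv : ConvexOn ℝ (Ioo a b) fun t => (star (v t) ⬝ᵥ v t).re := by
    refine convexOn_of_hasDerivAt2_nonneg (convex_Ioo a b) isOpen_Ioo
      (f' := fun t => 2 * (star (v t) ⬝ᵥ v' t).re)
      (f'' := fun t => 2 * ((star (v t) ⬝ᵥ v'' t).re + (star (v' t) ⬝ᵥ v' t).re))
      (fun z hz => hasDerivAt_re_star_dotProduct_self (hv z hz)) (fun z hz => ?_) (fun z hz => ?_)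
    · exact ((hasDerivAt_re_star_dotProduct (hv z hz) (hv' z hz)).const_mul 2).congr_deriv
        (by rw [Complex.add_re, add_comm])
    · obtain ⟨h0, h1, h2, h3⟩ := hskew z hz
      have hT0' : (T0' z)ᴴ = -T0' z := conjTranspose_eq_neg_of_hasDerivAt (hT0 z hz)
        (eventually_of_mem (Ioo_mem_nhds hz.1 hz.2) fun t ht => (hskew t ht).1)
      have := re_star_dotProduct_add_nonneg_of_ode (conjTranspose_sub_I_mul_smul_one h0 c) hT0'
        (conjTranspose_sub_I_mul_smul_one h1 x1) (conjTranspose_sub_I_mul_smul_one h2 x2)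
        (conjTranspose_sub_I_mul_smul_one h3 x3) (hode z hz)
      linarith
  intro z hz
  have hle := hconv.le_on_segment hz₁ hz₂ (by rwa [segment_eq_Icc h12.le])
  simp only [hv1, hv2, star_zero, zero_dotProduct, Complex.zero_re, max_self] at hle
  exact re_star_dotProduct_self_eq_zero.1 (hle.antisymm (re_star_dotProduct_self_nonneg _))

/-- A solution of `D₁*D₁ v = 0` (for a skew-hermitian background)
vanishing at two points vanishes identically between them. -/
theorem vanishing_between_zeros {n : ℕ} (a b : ℝ) (hab : a < b)
    (T0 T0' T1 T2 T3 : ℝ → Matrix (Fin n) (Fin n) ℂ)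
    (hT0 : ∀ z ∈ Ioo a b, ∀ i j, HasDerivAt (fun t => T0 t i j) (T0' z i j) z)
    (hT1 : ∀ i j, ContinuousOn (fun z => T1 z i j) (Ioo a b))
    (hT2 : ∀ i j, ContinuousOn (fun z => T2 z i j) (Ioo a b))
    (hT3 : ∀ i j, ContinuousOn (fun z => T3 z i j) (Ioo a b))
    (hskew : ∀ z ∈ Ioo a b,
        (T0 z)ᴴ = -T0 z ∧ (T1 z)ᴴ = -T1 z ∧ (T2 z)ᴴ = -T2 z ∧ (T3 z)ᴴ = -T3 z)
    (c x1 x2 x3 : ℝ)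
    (v v' v'' : ℝ → Fin n → ℂ)
    (hv : ∀ z ∈ Ioo a b, ∀ i, HasDerivAt (fun t => v t i) (v' z i) z)
    (hv' : ∀ z ∈ Ioo a b, ∀ i, HasDerivAt (fun t => v' t i) (v'' z i) z)
    (hode : ∀ z ∈ Ioo a b,
        (v'' z + (T0' z).mulVec (v z)
            + (T0 z - (Complex.I * ((c : ℝ) : ℂ))
                • (1 : Matrix (Fin n) (Fin n) ℂ)).mulVec (v' z))
          + (T0 z - (Complex.I * ((c : ℝ) : ℂ))
                • (1 : Matrix (Fin n) (Fin n) ℂ)).mulVec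
              (v' z + (T0 z - (Complex.I * ((c : ℝ) : ℂ))
                • (1 : Matrix (Fin n) (Fin n) ℂ)).mulVec (v z))
          + ((T1 z - (Complex.I * ((x1 : ℝ) : ℂ)) • (1 : Matrix (Fin n) (Fin n) ℂ))
              * (T1 z - (Complex.I * ((x1 : ℝ) : ℂ)) • (1 : Matrix (Fin n) (Fin n) ℂ))).mulVec (v z)
          + ((T2 z - (Complex.I * ((x2 : ℝ) : ℂ)) • (1 : Matrix (Fin n) (Fin n) ℂ))
              * (T2 z - (Complex.I * ((x2 : ℝ) : ℂ)) • (1 : Matrix (Fin n) (Fin n) ℂ))).mulVec (v z)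
          + ((T3 z - (Complex.I * ((x3 : ℝ) : ℂ)) • (1 : Matrix (Fin n) (Fin n) ℂ))
              * (T3 z - (Complex.I * ((x3 : ℝ) : ℂ)) • (1 : Matrix (Fin n) (Fin n) ℂ))).mulVec (v z)
          = 0)
    (z₁ z₂ : ℝ) (hz₁ : z₁ ∈ Ioo a b) (hz₂ : z₂ ∈ Ioo a b) (h12 : z₁ < z₂)
    (hv1 : v z₁ = 0) (hv2 : v z₂ = 0) :
    ∀ z ∈ Icc z₁ z₂, v z = 0 :=
  vanishing_between_zeros_general a b T0 T0' T1 T2 T3 hT0 hskew c x1 x2 x3 v v' v'' hv hv' hode z₁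
    z₂ hz₁ hz₂ h12 hv1 hv2
end

section
/- Let $a<b$ be real, let $T_0:[a,b]\to M_n(\mathbb{C})$ be continuously differentiable and $T_1,T_2,T_3:[a,b]\to M_n(\mathbb{C})$ be continuous, all skew-hermitian valued, let $c,x_1,x_2,x_3\in\mathbb{R}$, and set $\gamma = T_0 - ic$. Let $x_0\in(a,b)$ and $u,u_a,u_b\in\mathbb{C}^n$. Then there exists a unique continuous $v:[a,b]\to\mathbb{C}^n$ which is twice continuously differentiable on $[a,x_0]$ and on $[x_0,b]$, satisfies $(v'+\gamma v)' + \gamma(v'+\gamma v) + \sum_{j=1}^3 (T_j - ix_j)^2 v = 0$ on $[a,x_0)$ and on $(x_0,b]$, has $v(a)=u_a$, $v(b)=u_b$, and whose one-sided derivatives at $x_0$ satisfy the jump condition $v'(x_0^+)-v'(x_0^-)=u$. -/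
/-!
With `D = v' + γ v` and `V = Σⱼ (Tⱼ - i xⱼ)²` the equation is the linear system
`v' = D - γ v`, `D' = -γ D - V v`, in which `γ` is skew-hermitian and
`-V = Σⱼ (Tⱼ - i xⱼ)ᴴ (Tⱼ - i xⱼ)` is positive semidefinite. Along a solution,
`φ = Re ⟨v, D⟩` has `φ' = |D|² + ⟨v, -V v⟩ ≥ 0` and `|v|²' = 2 φ`. So if `v` vanishes at both
ends, then `φ ≤ φ b = 0`, `|v|²` decreases from `|v a|² = 0`, and `v ≡ 0`. Applied to the
difference of two solutions (whose jumps at `x₀` cancel) this gives uniqueness; applied to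
solutions with `v a = 0` it makes `D a ↦ v b` injective, hence bijective, which solves the
Dirichlet problem for the system. The Green's function is a solution of that Dirichlet problem
plus, to the right of `x₀`, the solution starting from `(v, D) = (0, u)`.
-/

open Matrix Set

/-- `(v, vl', vl'', vr', vr'')` is a continuous solution on `[a, b]`, twice continuously
differentiable on `[a, x₀]` and on `[x₀, b]`, of
`(v' + γv)' + γ(v' + γv) + Σⱼ (Tⱼ - ixⱼ)² v = 0` on `[a, x₀) ∪ (x₀, b]`, with boundary
values `v(a) = uₐ`, `v(b) = u_b` and derivative jump `v'(x₀⁺) - v'(x₀⁻) = u`.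
Here `γ = T0 - ic`. -/
def IsGreensNahmSol {n : ℕ} (a b x₀ : ℝ)
    (T0 T0' T1 T2 T3 : ℝ → Matrix (Fin n) (Fin n) ℂ)
    (c x1 x2 x3 : ℝ) (u ua ub : Fin n → ℂ)
    (v vl' vl'' vr' vr'' : ℝ → Fin n → ℂ) : Prop :=
  (∀ i, ContinuousOn (fun z => v z i) (Icc a b)) ∧
  (∀ z ∈ Icc a x₀, ∀ i, HasDerivWithinAt (fun t => v t i) (vl' z i) (Icc a x₀) z) ∧
  (∀ z ∈ Icc a x₀, ∀ i, HasDerivWithinAt (fun t => vl' t i) (vl'' z i) (Icc a x₀) z) ∧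
  (∀ i, ContinuousOn (fun z => vl'' z i) (Icc a x₀)) ∧
  (∀ z ∈ Icc x₀ b, ∀ i, HasDerivWithinAt (fun t => v t i) (vr' z i) (Icc x₀ b) z) ∧
  (∀ z ∈ Icc x₀ b, ∀ i, HasDerivWithinAt (fun t => vr' t i) (vr'' z i) (Icc x₀ b) z) ∧
  (∀ i, ContinuousOn (fun z => vr'' z i) (Icc x₀ b)) ∧
  (∀ z ∈ Ico a x₀,
      (vl'' z + (T0' z).mulVec (v z)
          + (T0 z - (Complex.I * ((c : ℝ) : ℂ))
              • (1 : Matrix (Fin n) (Fin n) ℂ)).mulVec (vl' z))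
        + (T0 z - (Complex.I * ((c : ℝ) : ℂ))
              • (1 : Matrix (Fin n) (Fin n) ℂ)).mulVec
            (vl' z + (T0 z - (Complex.I * ((c : ℝ) : ℂ))
              • (1 : Matrix (Fin n) (Fin n) ℂ)).mulVec (v z))
        + ((T1 z - (Complex.I * ((x1 : ℝ) : ℂ)) • (1 : Matrix (Fin n) (Fin n) ℂ))
            * (T1 z - (Complex.I * ((x1 : ℝ) : ℂ)) • (1 : Matrix (Fin n) (Fin n) ℂ))).mulVec (v z)
        + ((T2 z - (Complex.I * ((x2 : ℝ) : ℂ)) • (1 : Matrix (Fin n) (Fin n) ℂ))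
            * (T2 z - (Complex.I * ((x2 : ℝ) : ℂ)) • (1 : Matrix (Fin n) (Fin n) ℂ))).mulVec (v z)
        + ((T3 z - (Complex.I * ((x3 : ℝ) : ℂ)) • (1 : Matrix (Fin n) (Fin n) ℂ))
            * (T3 z - (Complex.I * ((x3 : ℝ) : ℂ)) • (1 : Matrix (Fin n) (Fin n) ℂ))).mulVec (v z)
        = 0) ∧
  (∀ z ∈ Ioc x₀ b,
      (vr'' z + (T0' z).mulVec (v z)
          + (T0 z - (Complex.I * ((c : ℝ) : ℂ))
              • (1 : Matrix (Fin n) (Fin n) ℂ)).mulVec (vr' z))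
        + (T0 z - (Complex.I * ((c : ℝ) : ℂ))
              • (1 : Matrix (Fin n) (Fin n) ℂ)).mulVec
            (vr' z + (T0 z - (Complex.I * ((c : ℝ) : ℂ))
              • (1 : Matrix (Fin n) (Fin n) ℂ)).mulVec (v z))
        + ((T1 z - (Complex.I * ((x1 : ℝ) : ℂ)) • (1 : Matrix (Fin n) (Fin n) ℂ))
            * (T1 z - (Complex.I * ((x1 : ℝ) : ℂ)) • (1 : Matrix (Fin n) (Fin n) ℂ))).mulVec (v z)
        + ((T2 z - (Complex.I * ((x2 : ℝ) : ℂ)) • (1 : Matrix (Fin n) (Fin n) ℂ))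
            * (T2 z - (Complex.I * ((x2 : ℝ) : ℂ)) • (1 : Matrix (Fin n) (Fin n) ℂ))).mulVec (v z)
        + ((T3 z - (Complex.I * ((x3 : ℝ) : ℂ)) • (1 : Matrix (Fin n) (Fin n) ℂ))
            * (T3 z - (Complex.I * ((x3 : ℝ) : ℂ)) • (1 : Matrix (Fin n) (Fin n) ℂ))).mulVec (v z)
        = 0) ∧
  v a = ua ∧ v b = ub ∧
  vr' x₀ - vl' x₀ = u

open scoped NNReal ComplexOrder

section LinearODE

variable {E : Type*} [NormedAddCommGroup E] [NormedSpace ℝ E]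

def IsLinearODESolOn (A : ℝ → E →L[ℝ] E) (s : Set ℝ) (f : ℝ → E) : Prop :=
  ∀ t ∈ s, HasDerivWithinAt f (A t (f t)) s t

namespace IsLinearODESolOn

variable {A : ℝ → E →L[ℝ] E} {s : Set ℝ} {f g : ℝ → E} {a b c : ℝ}

lemma mono (hf : IsLinearODESolOn A s f) {s' : Set ℝ} (hs : s' ⊆ s) :
    IsLinearODESolOn A s' f :=
  fun t ht => (hf t (hs ht)).mono hs

lemma congr (hf : IsLinearODESolOn A s f) (h : EqOn g f s) : IsLinearODESolOn A s g :=
  fun t ht => by simpa only [h ht] using (hf t ht).congr h (h ht)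

lemma sub (hf : IsLinearODESolOn A s f) (hg : IsLinearODESolOn A s g) :
    IsLinearODESolOn A s (f - g) :=
  fun t ht => by simpa only [Pi.sub_apply, map_sub] using (hf t ht).sub (hg t ht)

lemma add (hf : IsLinearODESolOn A s f) (hg : IsLinearODESolOn A s g) :
    IsLinearODESolOn A s (f + g) :=
  fun t ht => by simpa only [Pi.add_apply, map_add] using (hf t ht).add (hg t ht)

lemma continuousOn (hf : IsLinearODESolOn A s f) : ContinuousOn f s :=
  fun t ht => (hf t ht).continuousWithinAt

lemma union_Icc (hab : a ≤ b) (hbc : b ≤ c) (h₁ : IsLinearODESolOn A (Icc a b) f)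
    (h₂ : IsLinearODESolOn A (Icc b c) f) : IsLinearODESolOn A (Icc a c) f := by
  intro t _
  have piece : ∀ s : Set ℝ, IsClosed s → IsLinearODESolOn A s f →
      HasDerivWithinAt f (A t (f t)) s t := fun s hs hf => by
    by_cases h : t ∈ s
    exacts [hf t h, HasFDerivWithinAt.of_notMem_closure (by rwa [hs.closure_eq])]
  rw [← Icc_union_Icc_eq_Icc hab hbc]
  exact (piece _ isClosed_Icc h₁).union (piece _ isClosed_Icc h₂)

lemma piecewise (hab : a ≤ b) (hbc : b ≤ c) (hf : IsLinearODESolOn A (Icc a b) f)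
    (hg : IsLinearODESolOn A (Icc b c) g) (hfg : f b = g b) :
    IsLinearODESolOn A (Icc a c) (fun t => if t ≤ b then f t else g t) := by
  refine union_Icc hab hbc (hf.congr fun t ht => if_pos ht.2) (hg.congr fun t ht => ?_)
  rcases ht.1.eq_or_lt with rfl | hlt
  · simpa using hfg
  · exact if_neg hlt.not_ge

end IsLinearODESolOn

variable [CompleteSpace E] {A : ℝ → E →L[ℝ] E} {a b : ℝ}

lemma exists_isLinearODESolOn_of_mul_le {M : ℝ≥0} (hab : a ≤ b) (hA : ContinuousOn A (Icc a b))
    (hM : ∀ t ∈ Icc a b, ‖A t‖₊ ≤ M) (hMab : M * (b - a) ≤ 1 / 2) (x₀ : E) :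
    ∃ f : ℝ → E, f a = x₀ ∧ IsLinearODESolOn A (Icc a b) f := by
  -- on the ball of radius `‖x₀‖` around `x₀` the field is bounded by `2 M ‖x₀‖`
  refine IsPicardLindelof.exists_eq_forall_mem_Icc_hasDerivWithinAt₀
    (f := fun t x => A t x) (t₀ := ⟨a, le_rfl, hab⟩) (a := ‖x₀‖₊) (L := M * (2 * ‖x₀‖₊)) (K := M)
    ⟨fun t ht => ((A t).lipschitz.weaken (hM t ht)).lipschitzOnWith,
      fun x _ => hA.clm_apply continuousOn_const, fun t ht x hx => ?_, ?_⟩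
  · rw [mem_closedBall_iff_norm, coe_nnnorm] at hx
    calc ‖A t x‖ ≤ M * ‖x‖ := (A t).le_of_opNorm_le (hM t ht) x
      _ ≤ M * (2 * ‖x₀‖) := by
          gcongr
          linarith [norm_le_norm_add_norm_sub' x x₀]
      _ = _ := by simp
  · simp only [NNReal.coe_mul, NNReal.coe_ofNat, coe_nnnorm, sub_self,
      max_eq_left (sub_nonneg.2 hab), NNReal.coe_zero, sub_zero]
    nlinarith [norm_nonneg x₀]

lemma exists_isLinearODESolOn (hab : a ≤ b) (hA : ContinuousOn A (Icc a b)) (x₀ : E) :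
    ∃ f : ℝ → E, f a = x₀ ∧ IsLinearODESolOn A (Icc a b) f := by
  obtain ⟨C, hC⟩ := isCompact_Icc.exists_bound_of_continuousOn hA
  set M := C.toNNReal
  have hM : ∀ t ∈ Icc a b, ‖A t‖₊ ≤ M := fun t ht => by
    simpa using Real.toNNReal_le_toNNReal (hC t ht)
  set ℓ : ℝ := 1 / (2 * (M + 1))
  have hℓ : 0 < ℓ := by positivity
  have hMℓ : M * ℓ ≤ 1 / 2 := by
    rw [mul_one_div, div_le_div_iff₀ (by positivity) two_pos]
    linarith
  -- `k` Picard steps of length at most `ℓ` reach any `c ≤ a + k ℓ`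
  have key : ∀ k : ℕ, ∀ c ∈ Icc a b, c ≤ a + k * ℓ →
      ∃ f : ℝ → E, f a = x₀ ∧ IsLinearODESolOn A (Icc a c) f := by
    intro k
    induction k with
    | zero =>
      intro c hc hca
      refine exists_isLinearODESolOn_of_mul_le hc.1 (hA.mono (Icc_subset_Icc_right hc.2))
        (fun t ht => hM t ⟨ht.1, ht.2.trans hc.2⟩) ?_ x₀
      simp only [CharP.cast_eq_zero, zero_mul, add_zero] at hca
      nlinarith [M.2]
    | succ k ih =>
      intro c hc hck
      set c₀ := max a (c - ℓ)
      have hc₀c : c₀ ≤ c := max_le hc.1 (by linarith)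
      obtain ⟨f, hfa, hf⟩ := ih c₀ ⟨le_max_left _ _, hc₀c.trans hc.2⟩
        (max_le (by nlinarith [k.cast_nonneg (α := ℝ)]) (by push_cast at hck; linarith))
      have hac₀ : a ≤ c₀ := le_max_left _ _
      obtain ⟨g, hgc₀, hg⟩ := exists_isLinearODESolOn_of_mul_le hc₀c
        (hA.mono (Icc_subset_Icc hac₀ hc.2)) (fun t ht => hM t ⟨hac₀.trans ht.1, ht.2.trans hc.2⟩)
        ((mul_le_mul_of_nonneg_left (by linarith [le_max_right a (c - ℓ)]) M.2).trans hMℓ)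
        (f c₀)
      exact ⟨_, by simpa [hac₀] using hfa, hf.piecewise hac₀ hc₀c hg hgc₀.symm⟩
  obtain ⟨k, hk⟩ := exists_nat_ge ((b - a) / ℓ)
  exact key k b ⟨hab, le_rfl⟩ (by rw [div_le_iff₀ hℓ] at hk; linarith)

lemma exists_fundamental_solution (hab : a ≤ b)
    (hA : ContinuousOn A (Icc a b)) :
    ∃ Φ : ℝ → E →L[ℝ] E, Φ a = 1 ∧ ∀ x, IsLinearODESolOn A (Icc a b) (fun t => Φ t x) := by
  obtain ⟨Φ, hΦa, hΦ⟩ := exists_isLinearODESolOn hab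
    ((ContinuousLinearMap.compL ℝ E E E).continuous.comp_continuousOn hA) 1
  exact ⟨Φ, hΦa, fun x t ht => by simpa using (hΦ t ht).clm_apply (hasDerivWithinAt_const t _ x)⟩

end LinearODE

section Prod

variable {𝕜 F G : Type*} [NontriviallyNormedField 𝕜] [NormedAddCommGroup F] [NormedSpace 𝕜 F]
  [NormedAddCommGroup G] [NormedSpace 𝕜 G] {f : 𝕜 → F × G} {f' : F × G} {s : Set 𝕜} {t : 𝕜}

lemma HasDerivWithinAt.fst (h : HasDerivWithinAt f f' s t) :
    HasDerivWithinAt (fun t => (f t).1) f'.1 s t :=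
  (ContinuousLinearMap.fst 𝕜 F G).hasFDerivAt.comp_hasDerivWithinAt t h

lemma HasDerivWithinAt.snd (h : HasDerivWithinAt f f' s t) :
    HasDerivWithinAt (fun t => (f t).2) f'.2 s t :=
  (ContinuousLinearMap.snd 𝕜 F G).hasFDerivAt.comp_hasDerivWithinAt t h

end Prod

lemma continuousOn_of_hasDerivWithinAt_entries {m n F : Type*} [NormedAddCommGroup F]
    [NormedSpace ℝ F] {s : Set ℝ} {M M' : ℝ → Matrix m n F}
    (hM : ∀ t ∈ s, ∀ i j, HasDerivWithinAt (fun t => M t i j) (M' t i j) s t) :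
    ContinuousOn M s :=
  continuousOn_pi.2 fun i => continuousOn_pi.2 fun j t ht => (hM t ht i j).continuousWithinAt

lemma conjTranspose_sub_I_mul_smul_one_s12 {m : Type*} [DecidableEq m] {M : Matrix m m ℂ}
    (hM : Mᴴ = -M) (r : ℝ) :
    (M - (Complex.I * r) • (1 : Matrix m m ℂ))ᴴ = -(M - (Complex.I * r) • 1) := by
  rw [conjTranspose_sub, hM, conjTranspose_smul, conjTranspose_one, star_mul', Complex.star_def,
    Complex.conj_I, Complex.conj_ofReal, neg_mul, neg_smul, neg_sub, sub_neg_eq_add, add_comm]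
  abel

lemma HasDerivWithinAt.matrix_mulVec {m n : Type*} [Fintype n] {s : Set ℝ} {t : ℝ}
    {M : ℝ → Matrix m n ℂ} {M' : Matrix m n ℂ} {x : ℝ → n → ℂ} {x' : n → ℂ}
    (hM : ∀ i j, HasDerivWithinAt (fun t => M t i j) (M' i j) s t)
    (hx : HasDerivWithinAt x x' s t) :
    HasDerivWithinAt (fun t => M t *ᵥ x t) (M' *ᵥ x t + M t *ᵥ x') s t :=
  hasDerivWithinAt_pi.2 fun i => by
    simpa [mulVec, dotProduct, Finset.sum_add_distrib] using
      HasDerivWithinAt.fun_sum fun j _ => (hM i j).mul (hasDerivWithinAt_pi.1 hx j)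

section Matrix

variable {m n : Type*} [Fintype m] [Fintype n]

noncomputable def mulVecCLM : Matrix m n ℂ →L[ℝ] (n → ℂ) →L[ℝ] (m → ℂ) :=
  LinearMap.toContinuousLinearMap
    (LinearMap.toContinuousLinearMap.toLinearMap ∘ₗ Matrix.mulVecBilin ℝ ℝ)

@[simp] lemma mulVecCLM_apply (M : Matrix m n ℂ) (x : n → ℂ) : mulVecCLM M x = M *ᵥ x := rfl

lemma ContinuousOn.matrix_mulVec {s : Set ℝ} {M : ℝ → Matrix m n ℂ} {x : ℝ → n → ℂ}
    (hM : ContinuousOn M s) (hx : ContinuousOn x s) : ContinuousOn (fun t => M t *ᵥ x t) s :=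
  (mulVecCLM.continuous.comp_continuousOn hM).clm_apply hx

lemma HasDerivWithinAt.re_star_dotProduct {s : Set ℝ} {t : ℝ} {x y : ℝ → m → ℂ} {x' y' : m → ℂ}
    (hx : HasDerivWithinAt x x' s t) (hy : HasDerivWithinAt y y' s t) :
    HasDerivWithinAt (fun t => (star (x t) ⬝ᵥ y t).re)
      (star x' ⬝ᵥ y t + star (x t) ⬝ᵥ y').re s t := by
  have h : HasDerivWithinAt (fun t => star (x t) ⬝ᵥ y t)
      (star x' ⬝ᵥ y t + star (x t) ⬝ᵥ y') s t := by
    simpa [dotProduct, Finset.sum_add_distrib] using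
      HasDerivWithinAt.fun_sum fun i _ =>
        (hasDerivWithinAt_pi.1 hx i).star.mul (hasDerivWithinAt_pi.1 hy i)
  exact Complex.reCLM.hasFDerivAt.comp_hasDerivWithinAt t h

lemma star_dotProduct_mulVec_of_skew {γ : Matrix m m ℂ} (hγ : γᴴ = -γ) (x y : m → ℂ) :
    star x ⬝ᵥ γ *ᵥ y = -(star (γ *ᵥ x) ⬝ᵥ y) := by
  rw [dotProduct_mulVec, star_mulVec, hγ, vecMul_neg, neg_dotProduct, neg_neg]

lemma posSemidef_neg_mul_self_of_skew {M : Matrix m m ℂ} (hM : Mᴴ = -M) :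
    (-(M * M)).PosSemidef := by
  simpa [hM] using posSemidef_conjTranspose_mul_self M

lemma posSemidef_neg_add_mul_self_of_skew {A B C : Matrix m m ℂ} (hA : Aᴴ = -A) (hB : Bᴴ = -B)
    (hC : Cᴴ = -C) : (-(A * A + B * B + C * C)).PosSemidef := by
  rw [neg_add, neg_add]
  exact ((posSemidef_neg_mul_self_of_skew hA).add (posSemidef_neg_mul_self_of_skew hB)).add
    (posSemidef_neg_mul_self_of_skew hC)

/-- The first-order form of `(w' + γ w)' + γ (w' + γ w) + V w = 0` in the unknowns
`(w, D) = (w, w' + γ w)`. -/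
noncomputable def nahmSystem (γ V : Matrix m m ℂ) :
    ((m → ℂ) × (m → ℂ)) →L[ℝ] ((m → ℂ) × (m → ℂ)) :=
  let fst := ContinuousLinearMap.fst ℝ (m → ℂ) (m → ℂ)
  let snd := ContinuousLinearMap.snd ℝ (m → ℂ) (m → ℂ)
  (snd - mulVecCLM γ ∘L fst).prod (-(mulVecCLM γ ∘L snd) - mulVecCLM V ∘L fst)

@[simp] lemma nahmSystem_apply (γ V : Matrix m m ℂ) (x : (m → ℂ) × (m → ℂ)) :
    nahmSystem γ V x = (x.2 - γ *ᵥ x.1, -(γ *ᵥ x.2) - V *ᵥ x.1) := rfl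

lemma continuousOn_nahmSystem {s : Set ℝ} {γ V : ℝ → Matrix m m ℂ} (hγ : ContinuousOn γ s)
    (hV : ContinuousOn V s) : ContinuousOn (fun t => nahmSystem (γ t) (V t)) s := by
  have hγ' := mulVecCLM.continuous.comp_continuousOn hγ
  have hV' := mulVecCLM.continuous.comp_continuousOn hV
  exact (ContinuousLinearMap.prodₗᵢ (E := (m → ℂ) × (m → ℂ)) ℝ).continuous.comp_continuousOn
    ((continuousOn_const.sub (hγ'.clm_comp continuousOn_const)).prodMk
      ((hγ'.clm_comp continuousOn_const).neg.sub (hV'.clm_comp continuousOn_const)))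

lemma star_dotProduct_nahmSystem_energy {γ : Matrix m m ℂ} (hγ : γᴴ = -γ) (V : Matrix m m ℂ)
    (w D : m → ℂ) :
    star (D - γ *ᵥ w) ⬝ᵥ D + star w ⬝ᵥ (-(γ *ᵥ D) - V *ᵥ w) =
      star D ⬝ᵥ D + star w ⬝ᵥ (-V) *ᵥ w := by
  rw [star_sub, sub_dotProduct, dotProduct_sub, dotProduct_neg,
    star_dotProduct_mulVec_of_skew hγ, neg_mulVec, dotProduct_neg]
  abel

lemma re_star_dotProduct_nahmSystem_norm {γ : Matrix m m ℂ} (hγ : γᴴ = -γ) (w D : m → ℂ) :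
    (star (D - γ *ᵥ w) ⬝ᵥ w + star w ⬝ᵥ (D - γ *ᵥ w)).re = 2 * (star w ⬝ᵥ D).re := by
  rw [star_sub, sub_dotProduct, dotProduct_sub, star_dotProduct_mulVec_of_skew hγ,
    star_dotProduct D w]
  simp only [Complex.add_re, Complex.sub_re, Complex.neg_re, Complex.star_def, Complex.conj_re]
  ring

lemma fst_eq_zero_of_isLinearODESolOn_nahmSystem {γ V : ℝ → Matrix m m ℂ}
    {X : ℝ → (m → ℂ) × (m → ℂ)} {a b : ℝ} (hγ : ∀ t ∈ Icc a b, (γ t)ᴴ = -γ t)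
    (hV : ∀ t ∈ Icc a b, (-V t).PosSemidef)
    (hX : IsLinearODESolOn (fun t => nahmSystem (γ t) (V t)) (Icc a b) X)
    (ha : (X a).1 = 0) (hb : (X b).1 = 0) : ∀ t ∈ Icc a b, (X t).1 = 0 := by
  set φ : ℝ → ℝ := fun t => (star (X t).1 ⬝ᵥ (X t).2).re
  set N : ℝ → ℝ := fun t => (star (X t).1 ⬝ᵥ (X t).1).re
  have hφ : ∀ t ∈ Icc a b, HasDerivWithinAt φ
      (star (X t).2 ⬝ᵥ (X t).2 + star (X t).1 ⬝ᵥ (-V t) *ᵥ (X t).1).re (Icc a b) t := by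
    intro t ht
    rw [← star_dotProduct_nahmSystem_energy (hγ t ht)]
    exact (hX t ht).fst.re_star_dotProduct (hX t ht).snd
  have hN : ∀ t ∈ Icc a b, HasDerivWithinAt N (2 * φ t) (Icc a b) t := by
    intro t ht
    rw [← re_star_dotProduct_nahmSystem_norm (hγ t ht)]
    exact (hX t ht).fst.re_star_dotProduct (hX t ht).fst
  have hφ_le : ∀ t ∈ Icc a b, φ t ≤ 0 := by
    have hmono : MonotoneOn φ (Icc a b) :=
      monotoneOn_of_hasDerivWithinAt_nonneg (convex_Icc a b)
        (fun t ht => (hφ t ht).continuousWithinAt)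
        (fun t ht => (hφ t (interior_subset ht)).mono interior_subset)
        (fun t ht => (Complex.le_def.1 (add_nonneg (dotProduct_star_self_nonneg _)
          ((hV t (interior_subset ht)).dotProduct_mulVec_nonneg _))).1)
    intro t ht
    simpa [φ, hb] using hmono ht ⟨ht.1.trans ht.2, le_rfl⟩ ht.2
  have hanti : AntitoneOn N (Icc a b) :=
    antitoneOn_of_hasDerivWithinAt_nonpos (convex_Icc a b)
      (fun t ht => (hN t ht).continuousWithinAt)
      (fun t ht => (hN t (interior_subset ht)).mono interior_subset)
      (fun t ht => by linarith [hφ_le t (interior_subset ht)])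
  intro t ht
  have hNt : N t ≤ 0 := by simpa [N, ha] using hanti ⟨le_rfl, ht.1.trans ht.2⟩ ht ht.1
  obtain ⟨hre, him⟩ := Complex.le_def.1 (dotProduct_star_self_nonneg (X t).1)
  exact dotProduct_star_self_eq_zero.1 (Complex.ext (le_antisymm hNt hre) him.symm)

lemma exists_isLinearODESolOn_nahmSystem_fst_eq {γ V : ℝ → Matrix m m ℂ} {a b : ℝ} (hab : a < b)
    (hγc : ContinuousOn γ (Icc a b)) (hVc : ContinuousOn V (Icc a b))
    (hγ : ∀ t ∈ Icc a b, (γ t)ᴴ = -γ t) (hV : ∀ t ∈ Icc a b, (-V t).PosSemidef)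
    (ua ub : m → ℂ) :
    ∃ X : ℝ → (m → ℂ) × (m → ℂ),
      IsLinearODESolOn (fun t => nahmSystem (γ t) (V t)) (Icc a b) X ∧
        (X a).1 = ua ∧ (X b).1 = ub := by
  obtain ⟨Φ, hΦa, hΦ⟩ := exists_fundamental_solution hab.le (continuousOn_nahmSystem hγc hVc)
  have ha : a ∈ Icc a b := left_mem_Icc.2 hab.le
  set L := ContinuousLinearMap.fst ℝ _ _ ∘L Φ b ∘L ContinuousLinearMap.inr ℝ (m → ℂ) (m → ℂ)
  -- a solution with `w a = 0 = w b` vanishes, hence so does its initial slope `w' a = D a`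
  have hL : Function.Injective L := by
    refine (injective_iff_map_eq_zero L).2 fun q hq => ?_
    have hw := fst_eq_zero_of_isLinearODESolOn_nahmSystem hγ hV (hΦ (0, q)) (by simp [hΦa]) hq
    have h0 : HasDerivWithinAt (fun t => (Φ t (0, q)).1) 0 (Icc a b) a :=
      (hasDerivWithinAt_const a _ 0).congr hw (hw a ha)
    simpa [hΦa] using (uniqueDiffOn_Icc hab a ha).eq_deriv _ ((hΦ (0, q)) a ha).fst h0
  obtain ⟨q, hq⟩ := (LinearMap.injective_iff_surjective (f := L.toLinearMap)).1 hL
    (ub - (Φ b (ua, 0)).1)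
  refine ⟨fun t => Φ t (ua, q), hΦ _, by simp [hΦa], ?_⟩
  have hsplit : Φ b (ua, q) = Φ b (ua, 0) + Φ b (0, q) := by
    rw [← map_add, Prod.mk_add_mk, add_zero, zero_add]
  have hq' : (Φ b (0, q)).1 = ub - (Φ b (ua, 0)).1 := hq
  simp only [hsplit, Prod.fst_add, hq', add_sub_cancel]

/-- `(w' + γ w)' + γ (w' + γ w) + V w` expanded by the product rule, where `γ'`, `w'`, `w''` stand
for the derivatives of `γ`, `w`, `w'`. -/
def nahmOp (γ γ' V : Matrix m m ℂ) (w w' w'' : m → ℂ) : m → ℂ :=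
  w'' + γ' *ᵥ w + γ *ᵥ w' + γ *ᵥ (w' + γ *ᵥ w) + V *ᵥ w

def IsC2SolOn (γ γ' V : ℝ → Matrix m m ℂ) (s s' : Set ℝ) (w w' w'' : ℝ → m → ℂ) : Prop :=
  (∀ t ∈ s, HasDerivWithinAt w (w' t) s t) ∧ (∀ t ∈ s, HasDerivWithinAt w' (w'' t) s t) ∧
    ContinuousOn w'' s ∧ ∀ t ∈ s', nahmOp (γ t) (γ' t) (V t) (w t) (w' t) (w'' t) = 0

variable {γ γ' V : ℝ → Matrix m m ℂ} {s s' : Set ℝ} {w w' w'' : ℝ → m → ℂ}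

lemma IsC2SolOn.continuousOn (h : IsC2SolOn γ γ' V s s' w w' w'') : ContinuousOn w s :=
  fun t ht => (h.1 t ht).continuousWithinAt

lemma IsC2SolOn.congr {v : ℝ → m → ℂ} (h : IsC2SolOn γ γ' V s s w w' w'') (hs' : s' ⊆ s)
    (hv : EqOn v w s) : IsC2SolOn γ γ' V s s' v w' w'' :=
  ⟨fun t ht => (h.1 t ht).congr hv (hv ht), h.2.1, h.2.2.1,
    fun t ht => by simpa only [hv (hs' ht)] using h.2.2.2 t (hs' ht)⟩

lemma hasDerivWithinAt_nahmSystem {t : ℝ}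
    (hγ : ∀ i j, HasDerivWithinAt (fun t => γ t i j) (γ' t i j) s t)
    (hw : HasDerivWithinAt w (w' t) s t) (hw' : HasDerivWithinAt w' (w'' t) s t)
    (h : nahmOp (γ t) (γ' t) (V t) (w t) (w' t) (w'' t) = 0) :
    HasDerivWithinAt (fun t => (w t, w' t + γ t *ᵥ w t))
      (nahmSystem (γ t) (V t) (w t, w' t + γ t *ᵥ w t)) s t := by
  refine (hw.prodMk (hw'.add (HasDerivWithinAt.matrix_mulVec hγ hw))).congr_deriv ?_
  rw [nahmSystem_apply, add_sub_cancel_right, Prod.mk.injEq]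
  refine ⟨rfl, ?_⟩
  unfold nahmOp at h
  linear_combination (norm := module) h

lemma IsC2SolOn.isLinearODESolOn (h : IsC2SolOn γ γ' V s s' w w' w'') (hs' : s' ⊆ s)
    (hs : s ⊆ closure s') (hγ : ∀ t ∈ s, ∀ i j, HasDerivWithinAt (fun t => γ t i j) (γ' t i j) s t)
    (hγ' : ContinuousOn γ' s) (hV : ContinuousOn V s) :
    IsLinearODESolOn (fun t => nahmSystem (γ t) (V t)) s (fun t => (w t, w' t + γ t *ᵥ w t)) := by
  obtain ⟨hw, hw', hw'', heq⟩ := h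
  have hγc := continuousOn_of_hasDerivWithinAt_entries hγ
  have hwc : ContinuousOn w s := fun t ht => (hw t ht).continuousWithinAt
  have hw'c : ContinuousOn w' s := fun t ht => (hw' t ht).continuousWithinAt
  have heq' : EqOn (fun t => nahmOp (γ t) (γ' t) (V t) (w t) (w' t) (w'' t)) 0 s :=
    EqOn.of_subset_closure heq (by
      unfold nahmOp
      exact (((hw''.add (hγ'.matrix_mulVec hwc)).add (hγc.matrix_mulVec hw'c)).add
        (hγc.matrix_mulVec (hw'c.add (hγc.matrix_mulVec hwc)))).add (hV.matrix_mulVec hwc))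
      continuousOn_const hs' hs
  exact fun t ht => hasDerivWithinAt_nahmSystem (hγ t ht) (hw t ht) (hw' t ht) (heq' ht)

lemma IsLinearODESolOn.exists_isC2SolOn {X : ℝ → (m → ℂ) × (m → ℂ)}
    (hX : IsLinearODESolOn (fun t => nahmSystem (γ t) (V t)) s X)
    (hγ : ∀ t ∈ s, ∀ i j, HasDerivWithinAt (fun t => γ t i j) (γ' t i j) s t)
    (hγ' : ContinuousOn γ' s) (hV : ContinuousOn V s) :
    ∃ w'', IsC2SolOn γ γ' V s s (fun t => (X t).1) (fun t => (X t).2 - γ t *ᵥ (X t).1) w'' := by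
  have hγc := continuousOn_of_hasDerivWithinAt_entries hγ
  have hXc := hX.continuousOn
  refine ⟨fun t => -(γ t *ᵥ (X t).2) - V t *ᵥ (X t).1 -
      (γ' t *ᵥ (X t).1 + γ t *ᵥ ((X t).2 - γ t *ᵥ (X t).1)),
    fun t ht => (hX t ht).fst,
    fun t ht => (hX t ht).snd.sub (HasDerivWithinAt.matrix_mulVec (hγ t ht) (hX t ht).fst), ?_,
    fun t _ => ?_⟩
  · exact ((hγc.matrix_mulVec hXc.snd).neg.sub (hV.matrix_mulVec hXc.fst)).sub
      ((hγ'.matrix_mulVec hXc.fst).add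
        (hγc.matrix_mulVec (hXc.snd.sub (hγc.matrix_mulVec hXc.fst))))
  · simp only [nahmOp, sub_add_cancel]
    abel

variable {a b x₀ : ℝ}

def IsGreenSol (γ γ' V : ℝ → Matrix m m ℂ) (a b x₀ : ℝ) (u ua ub : m → ℂ)
    (v vl' vl'' vr' vr'' : ℝ → m → ℂ) : Prop :=
  ContinuousOn v (Icc a b) ∧ IsC2SolOn γ γ' V (Icc a x₀) (Ico a x₀) v vl' vl'' ∧
    IsC2SolOn γ γ' V (Icc x₀ b) (Ioc x₀ b) v vr' vr'' ∧ v a = ua ∧ v b = ub ∧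
    vr' x₀ - vl' x₀ = u

theorem IsGreenSol.eqOn (hx₀ : x₀ ∈ Ioo a b)
    (hγ : ∀ t ∈ Icc a b, ∀ i j, HasDerivWithinAt (fun t => γ t i j) (γ' t i j) (Icc a b) t)
    (hγ' : ContinuousOn γ' (Icc a b)) (hVc : ContinuousOn V (Icc a b))
    (hskew : ∀ t ∈ Icc a b, (γ t)ᴴ = -γ t) (hV : ∀ t ∈ Icc a b, (-V t).PosSemidef)
    {u ua ub : m → ℂ} {v vl' vl'' vr' vr'' w wl' wl'' wr' wr'' : ℝ → m → ℂ}
    (hw : IsGreenSol γ γ' V a b x₀ u ua ub w wl' wl'' wr' wr'')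
    (hv : IsGreenSol γ γ' V a b x₀ u ua ub v vl' vl'' vr' vr'') : EqOn w v (Icc a b) := by
  obtain ⟨hax, hxb⟩ := hx₀
  obtain ⟨-, hwL, hwR, hwa, hwb, hwu⟩ := hw
  obtain ⟨-, hvL, hvR, hva, hvb, hvu⟩ := hv
  have hL : Icc a x₀ ⊆ Icc a b := Icc_subset_Icc_right hxb.le
  have hR : Icc x₀ b ⊆ Icc a b := Icc_subset_Icc_left hax.le
  have left := fun {f f' f''} (h : IsC2SolOn γ γ' V (Icc a x₀) (Ico a x₀) f f' f'') =>
    h.isLinearODESolOn Ico_subset_Icc_self (closure_Ico hax.ne).ge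
      (fun t ht i j => (hγ t (hL ht) i j).mono hL) (hγ'.mono hL) (hVc.mono hL)
  have right := fun {f f' f''} (h : IsC2SolOn γ γ' V (Icc x₀ b) (Ioc x₀ b) f f' f'') =>
    h.isLinearODESolOn Ioc_subset_Icc_self (closure_Ioc hxb.ne).ge
      (fun t ht i j => (hγ t (hR ht) i j).mono hR) (hγ'.mono hR) (hVc.mono hR)
  -- equal jumps make the two pieces of the difference agree at `x₀`
  have hd := ((left hwL).sub (left hvL)).piecewise hax.le hxb.le ((right hwR).sub (right hvR))
    (by
      simp only [Pi.sub_apply, Prod.mk_sub_mk, Prod.mk.injEq, true_and]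
      linear_combination (norm := module) hvu - hwu)
  have h0 := fst_eq_zero_of_isLinearODESolOn_nahmSystem hskew hV hd
    (by simp [hax.le, hwa, hva]) (by simp [hxb.not_ge, hwb, hvb])
  intro t ht
  have := h0 t ht
  split_ifs at this <;> simpa [sub_eq_zero] using this

theorem exists_isGreenSol (hx₀ : x₀ ∈ Ioo a b)
    (hγ : ∀ t ∈ Icc a b, ∀ i j, HasDerivWithinAt (fun t => γ t i j) (γ' t i j) (Icc a b) t)
    (hγ' : ContinuousOn γ' (Icc a b)) (hVc : ContinuousOn V (Icc a b))
    (hskew : ∀ t ∈ Icc a b, (γ t)ᴴ = -γ t) (hV : ∀ t ∈ Icc a b, (-V t).PosSemidef)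
    (u ua ub : m → ℂ) :
    ∃ v vl' vl'' vr' vr'' : ℝ → m → ℂ, IsGreenSol γ γ' V a b x₀ u ua ub v vl' vl'' vr' vr'' := by
  obtain ⟨hax, hxb⟩ := hx₀
  have hL : Icc a x₀ ⊆ Icc a b := Icc_subset_Icc_right hxb.le
  have hR : Icc x₀ b ⊆ Icc a b := Icc_subset_Icc_left hax.le
  have hγc := continuousOn_of_hasDerivWithinAt_entries hγ
  -- `G` carries the jump `u` of `D = v' + γ v` at `x₀`, and `X` fixes the boundary values
  obtain ⟨G, hG₀, hG⟩ := exists_isLinearODESolOn hxb.le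
    ((continuousOn_nahmSystem hγc hVc).mono hR) (0, u)
  obtain ⟨X, hX, hXa, hXb⟩ :=
    exists_isLinearODESolOn_nahmSystem_fst_eq (hax.trans hxb) hγc hVc hskew hV ua (ub - (G b).1)
  obtain ⟨vl'', hl⟩ := (hX.mono hL).exists_isC2SolOn
    (fun t ht i j => (hγ t (hL ht) i j).mono hL) (hγ'.mono hL) (hVc.mono hL)
  obtain ⟨vr'', hr⟩ := ((hX.mono hR).add hG).exists_isC2SolOn
    (fun t ht i j => (hγ t (hR ht) i j).mono hR) (hγ'.mono hR) (hVc.mono hR)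
  set v := fun t => if t ≤ x₀ then (X t).1 else (X t + G t).1
  have hl' := hl.congr (v := v) Ico_subset_Icc_self fun t ht => if_pos ht.2
  have hr' := hr.congr (v := v) Ioc_subset_Icc_self fun t ht => by
    rcases ht.1.eq_or_lt with rfl | h
    · simp [v, hG₀]
    · simp [v, h.not_ge]
  refine ⟨v, _, vl'', _, vr'', ?_, hl', hr', by simp [v, hax.le, hXa],
    by simp [v, hxb.not_ge, hXb], by simp [hG₀]⟩
  rw [← Icc_union_Icc_eq_Icc hax.le hxb.le]
  exact hl'.continuousOn.union_of_isClosed hr'.continuousOn isClosed_Icc isClosed_Icc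

end Matrix

lemma isGreensNahmSol_iff {n : ℕ} {a b x₀ c x1 x2 x3 : ℝ}
    {T0 T0' T1 T2 T3 : ℝ → Matrix (Fin n) (Fin n) ℂ} {u ua ub : Fin n → ℂ}
    {v vl' vl'' vr' vr'' : ℝ → Fin n → ℂ} :
    IsGreensNahmSol a b x₀ T0 T0' T1 T2 T3 c x1 x2 x3 u ua ub v vl' vl'' vr' vr'' ↔
      IsGreenSol (fun t => T0 t - (Complex.I * c) • 1) T0'
        (fun t => (T1 t - (Complex.I * x1) • 1) * (T1 t - (Complex.I * x1) • 1) +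
          (T2 t - (Complex.I * x2) • 1) * (T2 t - (Complex.I * x2) • 1) +
          (T3 t - (Complex.I * x3) • 1) * (T3 t - (Complex.I * x3) • 1))
        a b x₀ u ua ub v vl' vl'' vr' vr'' := by
  simp only [IsGreensNahmSol, IsGreenSol, IsC2SolOn, nahmOp, hasDerivWithinAt_pi, continuousOn_pi,
    add_mulVec, ← add_assoc]
  tauto

theorem greens_function_existence_uniqueness_general {n : ℕ} (a b : ℝ)
    (T0 T0' T1 T2 T3 : ℝ → Matrix (Fin n) (Fin n) ℂ)
    (hT0 : ∀ z ∈ Icc a b, ∀ i j,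
        HasDerivWithinAt (fun t => T0 t i j) (T0' z i j) (Icc a b) z)
    (hT0' : ∀ i j, ContinuousOn (fun z => T0' z i j) (Icc a b))
    (hT1 : ∀ i j, ContinuousOn (fun z => T1 z i j) (Icc a b))
    (hT2 : ∀ i j, ContinuousOn (fun z => T2 z i j) (Icc a b))
    (hT3 : ∀ i j, ContinuousOn (fun z => T3 z i j) (Icc a b))
    (hskew : ∀ z ∈ Icc a b,
        (T0 z)ᴴ = -T0 z ∧ (T1 z)ᴴ = -T1 z ∧ (T2 z)ᴴ = -T2 z ∧ (T3 z)ᴴ = -T3 z)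
    (c x1 x2 x3 : ℝ)
    (x₀ : ℝ) (hx₀ : x₀ ∈ Ioo a b) (u ua ub : Fin n → ℂ) :
    ∃ v vl' vl'' vr' vr'' : ℝ → Fin n → ℂ,
      IsGreensNahmSol a b x₀ T0 T0' T1 T2 T3 c x1 x2 x3 u ua ub v vl' vl'' vr' vr'' ∧
      ∀ w wl' wl'' wr' wr'' : ℝ → Fin n → ℂ,
        IsGreensNahmSol a b x₀ T0 T0' T1 T2 T3 c x1 x2 x3 u ua ub w wl' wl'' wr' wr'' →
        ∀ z ∈ Icc a b, w z = v z := by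
  have hγ : ∀ z ∈ Icc a b, ∀ i j, HasDerivWithinAt
      (fun t => (T0 t - (Complex.I * c) • 1 : Matrix (Fin n) (Fin n) ℂ) i j) (T0' z i j)
      (Icc a b) z :=
    fun z hz i j => (hT0 z hz i j).sub_const _
  have hc : ∀ {T : ℝ → Matrix (Fin n) (Fin n) ℂ},
      (∀ i j, ContinuousOn (fun z => T z i j) (Icc a b)) → ContinuousOn T (Icc a b) :=
    fun h => continuousOn_pi.2 fun i => continuousOn_pi.2 (h i)
  have hsq : ∀ {T : ℝ → Matrix (Fin n) (Fin n) ℂ} (r : ℝ), ContinuousOn T (Icc a b) →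
      ContinuousOn (fun t => (T t - (Complex.I * r) • 1) * (T t - (Complex.I * r) • 1)) (Icc a b) :=
    fun _ h => (h.sub continuousOn_const).mul (h.sub continuousOn_const)
  have hVc := ((hsq x1 (hc hT1)).add (hsq x2 (hc hT2))).add (hsq x3 (hc hT3))
  have hγskew := fun z hz => conjTranspose_sub_I_mul_smul_one_s12 (hskew z hz).1 c
  have hV := fun z (hz : z ∈ Icc a b) => posSemidef_neg_add_mul_self_of_skew
    (conjTranspose_sub_I_mul_smul_one_s12 (hskew z hz).2.1 x1)
    (conjTranspose_sub_I_mul_smul_one_s12 (hskew z hz).2.2.1 x2)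
    (conjTranspose_sub_I_mul_smul_one_s12 (hskew z hz).2.2.2 x3)
  obtain ⟨v, vl', vl'', vr', vr'', hv⟩ := exists_isGreenSol hx₀ hγ (hc hT0') hVc hγskew hV u ua ub
  exact ⟨v, vl', vl'', vr', vr'', isGreensNahmSol_iff.2 hv, fun w wl' wl'' wr' wr'' hw =>
    (isGreensNahmSol_iff.1 hw).eqOn hx₀ hγ (hc hT0') hVc hγskew hV hv⟩

/-- Existence and uniqueness of the Green's function with a delta
source `δ_{x₀} u` for `D₁*D₁` on `[a, b]`, with Dirichlet boundary values. -/
theorem greens_function_existence_uniqueness {n : ℕ} (a b : ℝ) (hab : a < b)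
    (T0 T0' T1 T2 T3 : ℝ → Matrix (Fin n) (Fin n) ℂ)
    (hT0 : ∀ z ∈ Icc a b, ∀ i j,
        HasDerivWithinAt (fun t => T0 t i j) (T0' z i j) (Icc a b) z)
    (hT0' : ∀ i j, ContinuousOn (fun z => T0' z i j) (Icc a b))
    (hT1 : ∀ i j, ContinuousOn (fun z => T1 z i j) (Icc a b))
    (hT2 : ∀ i j, ContinuousOn (fun z => T2 z i j) (Icc a b))
    (hT3 : ∀ i j, ContinuousOn (fun z => T3 z i j) (Icc a b))
    (hskew : ∀ z ∈ Icc a b,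
        (T0 z)ᴴ = -T0 z ∧ (T1 z)ᴴ = -T1 z ∧ (T2 z)ᴴ = -T2 z ∧ (T3 z)ᴴ = -T3 z)
    (c x1 x2 x3 : ℝ)
    (x₀ : ℝ) (hx₀ : x₀ ∈ Ioo a b) (u ua ub : Fin n → ℂ) :
    ∃ v vl' vl'' vr' vr'' : ℝ → Fin n → ℂ,
      IsGreensNahmSol a b x₀ T0 T0' T1 T2 T3 c x1 x2 x3 u ua ub v vl' vl'' vr' vr'' ∧
      ∀ w wl' wl'' wr' wr'' : ℝ → Fin n → ℂ,
        IsGreensNahmSol a b x₀ T0 T0' T1 T2 T3 c x1 x2 x3 u ua ub w wl' wl'' wr' wr'' →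
        ∀ z ∈ Icc a b, w z = v z :=
  greens_function_existence_uniqueness_general a b T0 T0' T1 T2 T3 hT0 hT0' hT1 hT2 hT3 hskew c x1
    x2 x3 x₀ hx₀ u ua ub
end
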